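/- Assume hypotheses (H): n ≥ 4 is an integer, δ and δ′ are reals with 0 < δ′ < δ < 1/2 and 1/2 − δ′ < 1 − 2δ, λ is a real with 1/2 − δ′ ≤ λ ≤ 1 − 2δ, α is a real with n − 1 − λ/8 < λα < n − 1, and ā ∈ (0,1]. Then for all real numbers q, r, s, w, setting p := ā(2−ā)r − q, one has D₁(p² + q²) + D₂r² + D₃(p² − q²) + D₄s² + D₅w² ≤ λ·( C₁(p² + q²) + C₂r² + C₃(s² + w²) ). (This is Lemma 5.8: |T₄′|·Q_m̃(T₄,v) ≤ λ·⟨F_m̃(T₄,v), ∇T₄′⟩ pointwise, expressed through the formulas of Lemma 5.7.) -/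
import Mathlib

noncomputable section

def Xc (A δ : ℝ) : ℝ := (A * (2 - A) / 2) ^ (δ + 1 / 2)
def Yc (A δ : ℝ) : ℝ := (A * (2 - A) / 2) ^ (δ - 1 / 2)
def C1 (A δ α : ℝ) : ℝ :=
  (1 - A) ^ 2 / (2 - A) * Yc A δ + (1 - A) / (2 - A) ^ 2
    + α / (2 - A) ^ 2 * Xc A δ + α * A / (2 - A) ^ 2 * (1 / 2 - Xc A δ)
def C2 (A δ α : ℝ) : ℝ := α * A * (1 - A) * (1 - Xc A δ) - A * (1 - A)
def C3 (A δ α : ℝ) : ℝ :=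
  α * A / 2 + (1 - A) ^ 2 / (2 - A) + (α - 2) * (1 - A) ^ 2 / (2 - A) * Xc A δ
def D1 (A δ : ℝ) : ℝ :=
  (1 / 2 - δ) * ((1 - A) ^ 2 / (2 - A)) * Yc A δ - A / (2 * (2 - A) ^ 2) + Xc A δ / (2 - A)
def D2 (A : ℝ) : ℝ := -(A * (1 - A))
def D3 (n : ℕ) (A δ : ℝ) : ℝ := ((n : ℝ) - 1) / (2 - A) * (1 / 2 - Xc A δ)
def D4 (n : ℕ) (A δ : ℝ) : ℝ :=
  (1 + 2 * δ) * ((1 - A) ^ 2 / (2 - A)) * Xc A δ + ((n : ℝ) - 2) * A * (1 / 2 - Xc A δ)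
def D5 (n : ℕ) (A δ : ℝ) : ℝ :=
  (1 + 2 * δ) * ((1 - A) ^ 2 / (2 - A)) * Xc A δ + (n : ℝ) * A * (1 / 2 - Xc A δ)


lemma aux_qf (E d c u : ℝ) (hE : 0 < E) (hc : 0 ≤ c)
    (hdet : d^2*u^2 ≤ E^2*u^2 + 2*E*c) (q r : ℝ) :
    0 ≤ (E-d)*(u*r - q)^2 + (E+d)*q^2 + c*r^2 := by
  nlinarith [sq_nonneg (2*E*q - (E-d)*u*r),
    mul_nonneg (by linarith : (0:ℝ) ≤ E^2*u^2 + 2*E*c - d^2*u^2) (sq_nonneg r), hE]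


lemma aux_E0pos (A X K : ℝ) (hA0 : 0 < A) (hA1 : A ≤ 1) (hX0 : 0 < X)
    (hX2 : X^2 ≤ A*(2-A)/2) (hK : 23/8 ≤ K) :
    0 < X*((1-A)*(K-1)-1) + (K+1)*A/2 := by
  rcases le_or_gt 1 ((1-A)*(K-1)) with h | h
  · nlinarith [mul_nonneg hX0.le (sub_nonneg.2 h)]
  · have hX1 : X^2 ≤ A := by nlinarith
    have h47 : K - 2 ≤ A*(K-1) := by nlinarith
    have hx : X < (K+1)*A/2 := by nlinarith [sq_nonneg (X - (K+1)*A/2), sq_nonneg (K-23/8)]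
    have hBK : 0 ≤ X*((1-A)*(K-1)) :=
      mul_nonneg hX0.le (mul_nonneg (by linarith) (by linarith))
    nlinarith [hBK]

lemma aux_claim2 (A X K : ℝ) (hA0 : 0 < A) (hA1 : A ≤ 1) (hXh : 1/2 ≤ X)
    (hX2 : X^2 ≤ A*(2-A)/2) (hK : 23/8 ≤ K) :
    (K+1/8)*(X-1/2)*(2-A) ≤ X*((1-A)*(K-1)-1) + (K+1)*A/2 := by
  have hX1 : X ≤ 1 := by nlinarith
  have hkey : 0 ≤ (23/8)*(1-X) + A/2 - X*(2-A) - (X-1/2)*(2-A)/8 := by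
    nlinarith [sq_nonneg (1-X), sq_nonneg (A-1), mul_nonneg (sub_nonneg.2 hXh) (sub_nonneg.2 hX1), sq_nonneg (2*X-A), mul_nonneg (sub_nonneg.2 hXh) hA0.le]
  nlinarith [mul_le_mul_of_nonneg_right hK (by linarith : (0:ℝ) ≤ 1 - X)]

lemma aux_iia (A K : ℝ) (hA0 : 0 < A) (hA1 : A ≤ 1) (hK : 23/8 ≤ K)
    (hB : 1 ≤ (1-A)*(K-1))
    (hni : A*(2-A)/2*((1-A)*(K-1)-1)+(K+1)*A/2 < (K+1/8)*(1-A)^2*(2-A)^2/2) :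
    (K+1/8)^2*(2-A)^2 ≤ 4*(1-A)*K*((2-A)*((1-A)*(K-1)-1)+K+1) := by
  nlinarith [sq_nonneg ((1-A)*(K-1)-1), sq_nonneg (K-23/8), mul_pos hA0 (by linarith : (0:ℝ) < 2-A),
    mul_nonneg (by nlinarith : (0:ℝ) ≤ 1-A) (sq_nonneg (K-1)),
    mul_nonneg (mul_nonneg (by nlinarith : (0:ℝ) ≤ 1-A) (by linarith : (0:ℝ) ≤ K-1)) hA0.le,
    sq_nonneg (2-A), mul_pos (by nlinarith : (0:ℝ) < 1-A) (by linarith : (0:ℝ) < K)]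

lemma aux_iib (A K : ℝ) (hA0 : 0 < A) (hA1 : A ≤ 1) (hK : 23/8 ≤ K)
    (hB : (1-A)*(K-1) < 1)
    (hni : (K+1)*A/2-(1-(1-A)*(K-1))/2 < (K+1/8)*(1-A)^2*(2-A)^2/2) :
    (K+1/8)^2*A*(2-A)^2 ≤ 8*((K+1)*A/2-(1-(1-A)*(K-1))/2)*(1-A)*K := by
  have hB1 : 0 < 1 - A := by
    rcases lt_or_ge A 1 with h | h
    · linarith
    · have hA' : A = 1 := le_antisymm hA1 h
      rw [hA'] at hni; norm_num at hni; linarith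
  nlinarith [sq_nonneg ((1-A)*(K-1)-1), sq_nonneg (K-23/8), mul_pos hA0 (by linarith : (0:ℝ) < 2-A),
    sq_nonneg (1-A), mul_pos hB1 (by linarith : (0:ℝ) < K),
    mul_nonneg hA0.le (by linarith : (0:ℝ) ≤ K-1), sq_nonneg (A-1/2),
    mul_pos hB1 hA0, mul_nonneg (mul_nonneg hB1.le hA0.le) (by linarith : (0:ℝ) ≤ K-1)]

lemma aux_claimii (A X K : ℝ) (hA0 : 0 < A) (hA1 : A ≤ 1) (hXt : A*(2-A)/2 ≤ X)
    (hXh : X ≤ 1/2) (hK : 23/8 ≤ K)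
    (hni : X*((1-A)*(K-1)-1) + (K+1)*A/2 < (K+1/8)*(1-A)^2*(2-A)^2/2) :
    (K+1/8)^2*A*(2-A)^2 ≤ 8*(X*((1-A)*(K-1)-1) + (K+1)*A/2)*(1-A)*K := by
  have hBK0 : 0 ≤ (1-A)*K := mul_nonneg (by linarith) (by linarith)
  rcases le_or_gt 1 ((1-A)*(K-1)) with hB | hB
  · have hE0L : A*(2-A)/2*((1-A)*(K-1)-1)+(K+1)*A/2 ≤ X*((1-A)*(K-1)-1) + (K+1)*A/2 := by
      nlinarith [mul_le_mul_of_nonneg_right hXt (by linarith : (0:ℝ) ≤ (1-A)*(K-1)-1)]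
    have hni' := lt_of_le_of_lt hE0L hni
    have h := aux_iia A K hA0 hA1 hK hB hni'
    nlinarith [mul_le_mul_of_nonneg_right hE0L (by positivity : (0:ℝ) ≤ 8*((1-A)*K)),
      mul_le_mul_of_nonneg_left h hA0.le]
  · have hE0L : (K+1)*A/2-(1-(1-A)*(K-1))/2 ≤ X*((1-A)*(K-1)-1) + (K+1)*A/2 := by
      nlinarith [mul_nonneg (by linarith : (0:ℝ) ≤ 1/2 - X) (by linarith : (0:ℝ) ≤ 1-(1-A)*(K-1))]
    have hni' := lt_of_le_of_lt hE0L hni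
    have h := aux_iib A K hA0 hA1 hK hB hni'
    nlinarith [mul_le_mul_of_nonneg_right hE0L (by positivity : (0:ℝ) ≤ 8*((1-A)*K))]

set_option maxHeartbeats 800000 in
lemma aux_det (A X K N Et ct : ℝ) (hA0 : 0 < A) (hA1 : A ≤ 1)
    (hXt : A*(2-A)/2 ≤ X) (hX2 : X^2 ≤ A*(2-A)/2) (hX1 : X ≤ 1)
    (hK : 23/8 ≤ K) (hKN : N - 1 ≤ K + 1/8) (hN1 : 0 ≤ N - 1)
    (hE0le : X*((1-A)*(K-1)-1) + (K+1)*A/2 ≤ Et)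
    (hEt0 : 0 < Et)
    (hctle : K*(A*(1-A))*(1-X)*(2-A)^2 ≤ ct) (hct0 : 0 ≤ ct) :
    ((N-1)*(1/2-X)*(2-A))^2*(A*(2-A))^2 ≤ Et^2*(A*(2-A))^2 + 2*Et*ct := by
  have hA2 : (0:ℝ) < 2 - A := by linarith
  have hA2sq : (2-A) ≤ (2-A)^2 := by nlinarith
  have hX0 : 0 < X := by nlinarith
  have hEtct : 0 ≤ 2*Et*ct := by positivity
  rcases le_or_gt X (1/2) with hxh | hxh
  · rcases le_or_gt ((K+1/8)*(1-A)^2*(2-A)^2/2) (X*((1-A)*(K-1)-1) + (K+1)*A/2) with hi | hi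
    · -- (i): dt ≤ Et
      have h12 : 1/2 - X ≤ (1-A)^2/2 := by nlinarith
      have m1 : (N-1)*(1/2-X) ≤ (K+1/8)*((1-A)^2/2) :=
        mul_le_mul hKN h12 (by linarith) (by linarith)
      have m2 : (N-1)*(1/2-X)*(2-A) ≤ (K+1/8)*((1-A)^2/2)*(2-A) :=
        mul_le_mul_of_nonneg_right m1 hA2.le
      have m3 : (K+1/8)*((1-A)^2/2)*(2-A) ≤ (K+1/8)*((1-A)^2/2)*(2-A)^2 :=
        mul_le_mul_of_nonneg_left hA2sq (by positivity)
      have hd0 : 0 ≤ (N-1)*(1/2-X)*(2-A) :=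
        mul_nonneg (mul_nonneg hN1 (by linarith)) hA2.le
      have hdtEt : (N-1)*(1/2-X)*(2-A) ≤ Et := by nlinarith
      have hsq : ((N-1)*(1/2-X)*(2-A))^2 ≤ Et^2 := pow_le_pow_left₀ hd0 hdtEt 2
      have := mul_le_mul_of_nonneg_right hsq (sq_nonneg (A*(2-A)))
      linarith
    · -- (ii)
      have hii := aux_claimii A X K hA0 hA1 hXt hxh hK hi
      have e1 : (N-1)^2 ≤ (K+1/8)^2 := pow_le_pow_left₀ hN1 (by linarith) 2
      have h14 : (1/2-X)^2 ≤ (1-X)/4 := by nlinarith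
      have q1 : (N-1)^2*(1/2-X)^2 ≤ (K+1/8)^2*((1-X)/4) :=
        mul_le_mul e1 h14 (sq_nonneg _) (by positivity)
      have step1 : ((N-1)*(1/2-X)*(2-A))^2*(A*(2-A))^2
          ≤ (K+1/8)^2*((1-X)/4)*(2-A)^2*(A*(2-A))^2 := by
        have := mul_le_mul_of_nonneg_right q1
          (by positivity : (0:ℝ) ≤ (2-A)^2*(A*(2-A))^2)
        linarith [this]
      have step2 : (K+1/8)^2*((1-X)/4)*(2-A)^2*(A*(2-A))^2
          ≤ 2*(X*((1-A)*(K-1)-1) + (K+1)*A/2)*(K*(A*(1-A))*(1-X)*(2-A)^2) := by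
        have hmul := mul_le_mul_of_nonneg_right hii
          (mul_nonneg (mul_nonneg (by linarith : (0:ℝ) ≤ (1-X)/4) hA0.le) (sq_nonneg (2-A)))
        linarith [hmul]
      have step3 : 2*(X*((1-A)*(K-1)-1) + (K+1)*A/2)*(K*(A*(1-A))*(1-X)*(2-A)^2)
          ≤ 2*Et*ct := by
        have hpos : 0 ≤ K*(A*(1-A))*(1-X)*(2-A)^2 := by
          have h1A : (0:ℝ) ≤ 1 - A := by linarith
          have h1X : (0:ℝ) ≤ 1 - X := by linarith
          have hKp : (0:ℝ) ≤ K := by linarith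
          positivity
        have hE00 : 0 < X*((1-A)*(K-1)-1) + (K+1)*A/2 := aux_E0pos A X K hA0 hA1 hX0 hX2 hK
        have := mul_le_mul (by linarith : 2*(X*((1-A)*(K-1)-1) + (K+1)*A/2) ≤ 2*Et)
          hctle hpos (by linarith : (0:ℝ) ≤ 2*Et)
        linarith
      have hEtsq : 0 ≤ Et^2*(A*(2-A))^2 := by positivity
      linarith
  · -- X > 1/2
    have hc2 := aux_claim2 A X K hA0 hA1 hxh.le hX2 hK
    have hd0 : 0 ≤ (N-1)*(X-1/2)*(2-A) :=
      mul_nonneg (mul_nonneg hN1 (by linarith)) hA2.le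
    have hdle : (N-1)*(X-1/2)*(2-A) ≤ Et := by
      have hmm := mul_le_mul_of_nonneg_right hKN
        (mul_nonneg (by linarith : (0:ℝ) ≤ X-1/2) hA2.le)
      nlinarith [hmm]
    have hsq : ((N-1)*(X-1/2)*(2-A))^2 ≤ Et^2 := pow_le_pow_left₀ hd0 hdle 2
    have := mul_le_mul_of_nonneg_right hsq (sq_nonneg (A*(2-A)))
    nlinarith [this]


lemma aux_claim3Z (Z X dp lam : ℝ) (hZ0 : 0 ≤ Z) (hZ1 : Z ≤ 1)
    (hZX : 1 - Z ≤ 2*X) (hX0 : 0 ≤ X) (hX1 : X ≤ 1)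
    (hdp0 : 0 < dp) (hdp : dp < 1/2) (hl : 1/2 - dp ≤ lam) (hl2 : lam + 2*dp ≤ 1) :
    0 ≤ lam*Z*(1-X/8) + 2*dp*Z*X - (1+lam/8)*((1-Z)/2) + 4*(1-Z)*X := by
  have hlam0 : 0 < lam := by linarith
  rcases le_or_gt (1/2) X with hx | hx
  · nlinarith [mul_nonneg (mul_nonneg hlam0.le hZ0) (by linarith : (0:ℝ) ≤ 1 - X/8),
      mul_nonneg (mul_nonneg hdp0.le hZ0) hX0,
      mul_nonneg (by linarith : (0:ℝ) ≤ 1 - Z) (by linarith : (0:ℝ) ≤ 4*X - (1+lam/8)/2)]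
  · rcases le_or_gt 0 (lam*(1-X/8) + 2*dp*X - 4*X + (1+lam/8)/2) with hc | hc
    · have hbase : 0 ≤ (1-2*X)*(lam*(1-X/8) + 2*dp*X - 4*X + (1+lam/8)/2) + 4*X - (1+lam/8)/2 := by
        nlinarith [mul_nonneg (by linarith : (0:ℝ) ≤ 1-2*X) (by linarith : (0:ℝ) ≤ lam),
          sq_nonneg X, mul_nonneg hX0 (by linarith : (0:ℝ) ≤ 1-2*X),
          mul_nonneg (mul_nonneg hdp0.le hX0) (by linarith : (0:ℝ) ≤ 1-2*X),
          mul_nonneg hX0 hdp0.le, sq_nonneg (1-2*X),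
          mul_nonneg (by linarith : (0:ℝ) ≤ lam - (1/2 - dp)) (by linarith : (0:ℝ) ≤ 1-2*X)]
      have hmono : 0 ≤ (Z - (1-2*X))*(lam*(1-X/8) + 2*dp*X - 4*X + (1+lam/8)/2) :=
        mul_nonneg (by linarith) hc
      nlinarith [hbase, hmono]
    · have hmono : 0 ≤ (1 - Z)*(-(lam*(1-X/8) + 2*dp*X - 4*X + (1+lam/8)/2)) :=
        mul_nonneg (by linarith) (by linarith)
      nlinarith [mul_nonneg (mul_nonneg hlam0.le hZ0) (by linarith : (0:ℝ) ≤ 1 - X/8),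
        mul_nonneg (mul_nonneg hdp0.le hZ0) hX0, hmono]

lemma aux_W5 (N K lam dp A X : ℝ) (hA0 : 0 < A) (hA1 : A ≤ 1)
    (hXt : A*(2-A)/2 ≤ X) (hX0 : 0 ≤ X) (hX1 : X ≤ 1)
    (hdp0 : 0 < dp) (hdp : dp < 1/2) (hl : 1/2 - dp ≤ lam) (hl2 : lam + 2*dp ≤ 1)
    (hm : 2*dp - lam/8 ≤ K - 2*lam - 1 - 2*dp) (hKn : -1 - lam/8 ≤ K - N)
    (hN4 : 4 ≤ N) :
    0 ≤ lam*(1-A)^2 + (K-2*lam-1-2*dp)*((1-A)^2*X) + (K-N)*(A*(2-A)/2)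
        + N*((A*(2-A))*X) := by
  have hu0 : (0:ℝ) ≤ A*(2-A) := by nlinarith
  have h3Z := aux_claim3Z ((1-A)^2) X dp lam (sq_nonneg _) (by nlinarith)
    (by nlinarith) hX0 hX1 hdp0 hdp hl hl2
  have p1 : 0 ≤ ((K-2*lam-1-2*dp) - (2*dp - lam/8))*((1-A)^2*X) :=
    mul_nonneg (by linarith) (mul_nonneg (sq_nonneg _) hX0)
  have p2 : 0 ≤ ((K-N) - (-1-lam/8))*(A*(2-A)/2) :=
    mul_nonneg (by linarith) (by linarith)
  have p3 : 0 ≤ (N-4)*((A*(2-A))*X) :=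
    mul_nonneg (by linarith) (mul_nonneg hu0 hX0)
  nlinarith [h3Z, p1, p2, p3]

lemma aux_W4 (N K lam dp A X : ℝ) (hA0 : 0 < A) (hA1 : A ≤ 1)
    (hX0 : 0 ≤ X) (hX1 : X ≤ 1)
    (hdp0 : 0 < dp) (hdp : dp < 1/2) (hl : 1/2 - dp ≤ lam) (hl2 : lam + 2*dp ≤ 1)
    (hm : 2*dp - lam/8 ≤ K - 2*lam - 1 - 2*dp) (hKn : 1 - lam/8 ≤ K - N + 2)
    (hN4 : 4 ≤ N) :
    0 ≤ lam*(1-A)^2 + (K-2*lam-1-2*dp)*((1-A)^2*X) + (K-N+2)*(A*(2-A)/2)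
        + (N-2)*((A*(2-A))*X) := by
  have hu0 : (0:ℝ) ≤ A*(2-A) := by nlinarith
  have hlam1 : lam ≤ 1 := by linarith
  have p1 : 0 ≤ ((K-2*lam-1-2*dp) - (2*dp - lam/8))*((1-A)^2*X) :=
    mul_nonneg (by linarith) (mul_nonneg (sq_nonneg _) hX0)
  have p2 : 0 ≤ ((K-N+2) - (1-lam/8))*(A*(2-A)/2) :=
    mul_nonneg (by linarith) (by linarith)
  have p3 : 0 ≤ (N-2)*((A*(2-A))*X) :=
    mul_nonneg (by linarith) (mul_nonneg hu0 hX0)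
  have p4 : 0 ≤ lam*(1-A)^2*(1-X/8) :=
    mul_nonneg (mul_nonneg (by linarith) (sq_nonneg _)) (by linarith)
  have p5 : 0 ≤ (2*dp)*((1-A)^2*X) :=
    mul_nonneg (by linarith) (mul_nonneg (sq_nonneg _) hX0)
  have p6 : 0 ≤ (1-lam/8)*(A*(2-A)/2) :=
    mul_nonneg (by linarith) (by linarith)
  nlinarith [p1, p2, p3, p4, p5, p6]

set_option maxHeartbeats 1000000 in
theorem stmt8 (n : ℕ) (hn : 4 ≤ n) (δ δ' lam α A : ℝ)
    (h1 : 0 < δ') (h2 : δ' < δ) (h3 : δ < 1 / 2)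
    (h4 : 1 / 2 - δ' < 1 - 2 * δ)
    (h5 : 1 / 2 - δ' ≤ lam) (h6 : lam ≤ 1 - 2 * δ)
    (h7 : (n : ℝ) - 1 - lam / 8 < lam * α) (h8 : lam * α < (n : ℝ) - 1)
    (h9 : 0 < A) (h10 : A ≤ 1) :
    ∀ q r s w : ℝ,
      D1 A δ' * ((A * (2 - A) * r - q) ^ 2 + q ^ 2) + D2 A * r ^ 2
          + D3 n A δ' * ((A * (2 - A) * r - q) ^ 2 - q ^ 2)
          + D4 n A δ' * s ^ 2 + D5 n A δ' * w ^ 2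
        ≤ lam * (C1 A δ' α * ((A * (2 - A) * r - q) ^ 2 + q ^ 2) + C2 A δ' α * r ^ 2
            + C3 A δ' α * (s ^ 2 + w ^ 2)) := by
  intro q r s w
  have hA2 : (0:ℝ) < 2 - A := by linarith
  have hA2' : (2 - A) ≠ 0 := ne_of_gt hA2
  have hB0 : (0:ℝ) ≤ 1 - A := by linarith
  have ht0 : (0:ℝ) < A*(2-A)/2 := by
    have := mul_pos h9 hA2; linarith
  have ht1 : A*(2-A)/2 ≤ 1/2 := by nlinarith [sq_nonneg (1-A)]
  have ht1' : A*(2-A)/2 ≤ 1 := by linarith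
  set X := Xc A δ' with hXdef
  set Y := Yc A δ' with hYdef
  have hX0 : 0 < X := Real.rpow_pos_of_pos ht0 _
  have hXt : A*(2-A)/2 ≤ X := by
    have h := Real.rpow_le_rpow_of_exponent_ge ht0 ht1' (by linarith : δ' + 1/2 ≤ 1)
    rw [Real.rpow_one] at h; exact h
  have hY1 : (1:ℝ) ≤ Y := by
    have h := Real.rpow_le_rpow_of_exponent_ge ht0 ht1' (by linarith : δ' - 1/2 ≤ (0:ℝ))
    rw [Real.rpow_zero] at h; exact h
  have hX2 : X^2 ≤ A*(2-A)/2 := by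
    have h1 : X^2 = (A*(2-A)/2) ^ ((δ' + 1/2) + (δ' + 1/2)) := by
      rw [hXdef]
      show ((A * (2 - A) / 2) ^ (δ' + 1/2 : ℝ))^2 = _
      rw [sq, ← Real.rpow_add ht0]
    have h2 := Real.rpow_le_rpow_of_exponent_ge ht0 ht1' (by linarith : (1:ℝ) ≤ (δ' + 1/2) + (δ' + 1/2))
    rw [Real.rpow_one] at h2
    rw [h1]; exact h2
  have hX1 : X ≤ 1 := by nlinarith [sq_nonneg (X-1)]
  have hN4 : (4:ℝ) ≤ (n:ℝ) := by exact_mod_cast hn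
  have hlam0 : 0 < lam := by linarith
  have hlam1 : lam ≤ 1 := by linarith
  have hld : lam + 2*δ' < 1 := by linarith
  have hK23 : 23/8 ≤ lam*α := by linarith
  have hKN : (n:ℝ)-1 ≤ lam*α + 1/8 := by linarith
  have hK0 : (0:ℝ) < lam*α := by linarith
  set K := lam*α with hKdef
  set E0 : ℝ := X*((1-A)*(K-1)-1) + (K+1)*A/2 with hE0def
  set Et : ℝ := (lam * C1 A δ' α - D1 A δ') * (2-A)^2 with hEtdef
  set dt : ℝ := D3 n A δ' * (2-A)^2 with hdtdef
  set ct : ℝ := (lam * C2 A δ' α - D2 A) * (2-A)^2 with hctdef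
  have hEtid : Et = (lam-(1/2-δ'))*(1-A)^2*(2-A)*Y + lam*(1-A) + E0 := by
    rw [hEtdef, hE0def, hKdef]
    simp only [C1, D1]
    rw [← hXdef, ← hYdef]
    field_simp
    ring
  have hdtid : dt = (((n:ℝ)-1)*(1/2-X)*(2-A)) := by
    rw [hdtdef]; simp only [D3]; rw [← hXdef]
    field_simp
  have hctid : ct = K*(A*(1-A))*(1-X)*(2-A)^2 + (1-lam)*(A*(1-A))*(2-A)^2 := by
    rw [hctdef, hKdef]; simp only [C2, D2]; rw [← hXdef]; ring
  have hE0pos : 0 < E0 := aux_E0pos A X K h9 h10 hX0 hX2 hK23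
  have hEtE0 : E0 ≤ Et := by
    rw [hEtid]
    have hG : 0 ≤ (lam-(1/2-δ'))*(1-A)^2*(2-A)*Y :=
      mul_nonneg (mul_nonneg (mul_nonneg (by linarith) (sq_nonneg _)) hA2.le) (by linarith)
    linarith [hG, mul_nonneg hlam0.le hB0]
  have hEt0 : 0 < Et := lt_of_lt_of_le hE0pos hEtE0
  have hctle : K*(A*(1-A))*(1-X)*(2-A)^2 ≤ ct := by
    rw [hctid]
    have : 0 ≤ (1-lam)*(A*(1-A))*(2-A)^2 :=
      mul_nonneg (mul_nonneg (by linarith) (mul_nonneg h9.le hB0)) (sq_nonneg _)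
    linarith
  have hct0 : 0 ≤ ct := by
    have : 0 ≤ K*(A*(1-A))*(1-X)*(2-A)^2 :=
      mul_nonneg (mul_nonneg (mul_nonneg hK0.le (mul_nonneg h9.le hB0)) (by linarith)) (sq_nonneg _)
    linarith
  have hDET : dt^2*(A*(2-A))^2 ≤ Et^2*(A*(2-A))^2 + 2*Et*ct := by
    have h := aux_det A X K ((n:ℝ)) Et ct h9 h10 hXt hX2 hX1 hK23 hKN
      (by linarith) hEtE0 hEt0 hctle hct0
    rw [hdtid]
    exact h
  have hQF : 0 ≤ (Et-dt)*(A*(2-A)*r - q)^2 + (Et+dt)*q^2 + ct*r^2 :=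
    aux_qf Et dt ct (A*(2-A)) hEt0 hct0 hDET q r
  have hW5 : 0 ≤ lam * C3 A δ' α - D5 n A δ' := by
    have hid : (lam * C3 A δ' α - D5 n A δ') * (2-A) =
        lam*(1-A)^2 + (K-2*lam-1-2*δ')*((1-A)^2*X) + (K-(n:ℝ))*(A*(2-A)/2)
          + (n:ℝ)*((A*(2-A))*X) := by
      rw [hKdef]; simp only [C3, D5]; rw [← hXdef]
      field_simp; ring
    have hW := aux_W5 ((n:ℝ)) K lam δ' A X h9 h10 hXt hX0.le hX1 h1 (by linarith)
      h5 hld.le (by linarith) (by linarith) hN4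
    have hp : 0 ≤ (lam * C3 A δ' α - D5 n A δ') * (2-A) := by rw [hid]; exact hW
    exact le_of_mul_le_mul_right (by simpa using hp) hA2
  have hW4 : 0 ≤ lam * C3 A δ' α - D4 n A δ' := by
    have hid : (lam * C3 A δ' α - D4 n A δ') * (2-A) =
        lam*(1-A)^2 + (K-2*lam-1-2*δ')*((1-A)^2*X) + (K-(n:ℝ)+2)*(A*(2-A)/2)
          + ((n:ℝ)-2)*((A*(2-A))*X) := by
      rw [hKdef]; simp only [C3, D4]; rw [← hXdef]
      field_simp; ring
    have hW := aux_W4 ((n:ℝ)) K lam δ' A X h9 h10 hX0.le hX1 h1 (by linarith)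
      h5 hld.le (by linarith) (by linarith) hN4
    have hp : 0 ≤ (lam * C3 A δ' α - D4 n A δ') * (2-A) := by rw [hid]; exact hW
    exact le_of_mul_le_mul_right (by simpa using hp) hA2
  rw [← sub_nonneg]
  have key : (lam * (C1 A δ' α * ((A * (2 - A) * r - q) ^ 2 + q ^ 2) + C2 A δ' α * r ^ 2
        + C3 A δ' α * (s ^ 2 + w ^ 2))
      - (D1 A δ' * ((A * (2 - A) * r - q) ^ 2 + q ^ 2) + D2 A * r ^ 2
        + D3 n A δ' * ((A * (2 - A) * r - q) ^ 2 - q ^ 2)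
        + D4 n A δ' * s ^ 2 + D5 n A δ' * w ^ 2)) * (2-A)^2
      = (Et-dt)*(A*(2-A)*r - q)^2 + (Et+dt)*q^2 + ct*r^2
        + (2-A)^2*((lam * C3 A δ' α - D4 n A δ') * s^2 + (lam * C3 A δ' α - D5 n A δ') * w^2) := by
    rw [hEtdef, hdtdef, hctdef]; ring
  have hsum : 0 ≤ (lam * (C1 A δ' α * ((A * (2 - A) * r - q) ^ 2 + q ^ 2) + C2 A δ' α * r ^ 2
        + C3 A δ' α * (s ^ 2 + w ^ 2))
      - (D1 A δ' * ((A * (2 - A) * r - q) ^ 2 + q ^ 2) + D2 A * r ^ 2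
        + D3 n A δ' * ((A * (2 - A) * r - q) ^ 2 - q ^ 2)
        + D4 n A δ' * s ^ 2 + D5 n A δ' * w ^ 2)) * (2-A)^2 := by
    rw [key]
    have h1' : 0 ≤ (2-A)^2*((lam * C3 A δ' α - D4 n A δ') * s^2 + (lam * C3 A δ' α - D5 n A δ') * w^2) :=
      mul_nonneg (sq_nonneg _) (add_nonneg (mul_nonneg hW4 (sq_nonneg s)) (mul_nonneg hW5 (sq_nonneg w)))
    linarith [hQF]
  have hpos : (0:ℝ) < (2-A)^2 := by positivity
  exact le_of_mul_le_mul_right (by simpa using hsum) hpos
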